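/- Let → be a binary (step) relation on states K, and let →_d be a 'debugger' relation on pairs (K, S) where S is a nonempty list of snapshot states, defined by two rules: (forward) (K, S) →_d (K', S) whenever K → K'; (forward-snapshot) (K, S) →_d (K', S ++ [K']) whenever K → K'; and (backward) (K, S ++ [K_n]) →_d (K_m, S ++ [K_n]) whenever K_n →* K_m (reflexive–transitive closure). Then soundness holds: if every snapshot in the initial list is reachable from K_0 via →*, and (K_0, S_0) →_d* (K, S), then K_0 →* K. -/
import Mathlib


/-- The debugger step relation on pairs of a current state and a snapshot list. -/
inductive DStep {K : Type*} (step : K → K → Prop) :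
    K × List K → K × List K → Prop
  | forward {k k' : K} {S : List K} (h : step k k') :
      DStep step (k, S) (k', S)
  | forwardSnap {k k' : K} {S : List K} (h : step k k') :
      DStep step (k, S) (k', S ++ [k'])
  | backward {k kn km : K} {S : List K}
      (h : Relation.ReflTransGen step kn km) :
      DStep step (k, S ++ [kn]) (km, S ++ [kn])

lemma dstep_inv {K : Type*} {step : K → K → Prop} {a b : K × List K} (k0 : K)
    (hd : DStep step a b)
    (h1 : Relation.ReflTransGen step k0 a.1)
    (h2 : ∀ s ∈ a.2, Relation.ReflTransGen step k0 s) :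
    Relation.ReflTransGen step k0 b.1 ∧
      ∀ s ∈ b.2, Relation.ReflTransGen step k0 s := by
  cases hd with
  | forward h => exact ⟨h1.tail h, h2⟩
  | forwardSnap h =>
      refine ⟨h1.tail h, ?_⟩
      intro s hs
      rcases List.mem_append.1 hs with hs | hs
      · exact h2 s hs
      · simp at hs; subst hs; exact h1.tail h
  | @backward k kn km S h =>
      have hkn : Relation.ReflTransGen step k0 kn := h2 kn (by simp)
      exact ⟨hkn.trans h, h2⟩

/-- Debugger soundness: if every snapshot in the initial list is reachable from
`k0`, and the debugger takes any number of steps from `(k0, S0)` to `(k, S)`,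
then `k` is reachable from `k0` in the base relation. -/
theorem stmt4 {K : Type*} (step : K → K → Prop) (k0 : K) (S0 : List K)
    (hS0 : ∀ s ∈ S0, Relation.ReflTransGen step k0 s)
    (k : K) (S : List K)
    (h : Relation.ReflTransGen (DStep step) (k0, S0) (k, S)) :
    Relation.ReflTransGen step k0 k := by
  have H : ∀ b : K × List K, Relation.ReflTransGen (DStep step) (k0, S0) b →
      Relation.ReflTransGen step k0 b.1 ∧
        ∀ s ∈ b.2, Relation.ReflTransGen step k0 s := by
    intro b hb
    induction hb with
    | refl => exact ⟨.refl, hS0⟩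
    | tail _ hd ih => exact dstep_inv k0 hd ih.1 ih.2
  exact (H (k, S) h).1
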